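/- Let V, W be finite-dimensional complex inner product spaces with lattices L_V ⊂ V, L_W ⊂ W (full-rank ℤ-lattices). Let f, g : W → V be linear maps sending L_W into L_V, with adjoints f*, g* : V → W sending L_V into L_W, satisfying f* ∘ f = r·id_W and g* ∘ g = r·id_W for an integer r ≥ 1. Let d > 2r be an integer, and suppose f(λ) − g(λ) ∈ d·L_V for all λ ∈ L_W. Then f = g. -/

import Mathlib

/-!
Write `D = f - g`. For `ν ∈ ker D`, `⟪f ν, D μ⟫ = ⟪ν, f* f μ⟫ - ⟪ν, g* g μ⟫ = 0`, so `f*` and `g*`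
map `range D` into `(ker D)ᗮ`; and `f* x = g* x = 0` forces `x ⊥ range D`. So if `μ ∈ L_W` has
`D μ = d σ ≠ 0` with `σ ∈ L_V`, one of `f* σ`, `g* σ` is a nonzero lattice vector outside `ker D`.
As `‖f w‖ = √r ‖w‖` and `‖f*‖ ≤ √r`, its norm is at most `√r ‖σ‖ ≤ (2r / d) ‖μ‖`. Since
`2r / d < 1`, iterating gives lattice vectors outside `ker D` of arbitrarily small norm, which
discreteness forbids; so `D` vanishes on `L_W`, which spans `W`.
-/

open scoped InnerProductSpace

theorem exists_pos_forall_le_norm_of_discreteTopology (E : Type*) [NormedAddCommGroup E]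
    [DiscreteTopology E] : ∃ ε > 0, ∀ x : E, x ≠ 0 → ε ≤ ‖x‖ := by
  obtain ⟨ε, hε, hball⟩ := Metric.isOpen_singleton_iff.mp (isOpen_discrete ({0} : Set E))
  exact ⟨ε, hε, fun x hx => le_of_not_gt fun hlt => hx (hball x (by simpa using hlt))⟩

theorem Set.eq_empty_of_forall_exists_norm_le_mul {E : Type*} [NormedAddCommGroup E]
    [DiscreteTopology E] {S : Set E} (hS : (0 : E) ∉ S) {q : ℝ} (hq₀ : 0 ≤ q) (hq₁ : q < 1)
    (hdesc : ∀ x ∈ S, ∃ y ∈ S, ‖y‖ ≤ q * ‖x‖) : S = ∅ := by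
  obtain ⟨ε, hε, hgap⟩ := exists_pos_forall_le_norm_of_discreteTopology E
  have hbound : ∀ n : ℕ, ∀ x ∈ S, ε ≤ q ^ n * ‖x‖ := by
    intro n
    induction n with
    | zero => exact fun x hx => by simpa using hgap x (ne_of_mem_of_not_mem hx hS)
    | succ n ih =>
      intro x hx
      obtain ⟨y, hy, hyx⟩ := hdesc x hx
      calc ε ≤ q ^ n * ‖y‖ := ih y hy
        _ ≤ q ^ n * (q * ‖x‖) := by gcongr
        _ = q ^ (n + 1) * ‖x‖ := by ring
  refine Set.eq_empty_of_forall_notMem fun x hx => ?_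
  have hx₀ : 0 < ‖x‖ := norm_pos_iff.mpr (ne_of_mem_of_not_mem hx hS)
  obtain ⟨n, hn⟩ := exists_pow_lt_of_lt_one (div_pos hε hx₀) hq₁
  linarith [hbound n x hx, (lt_div_iff₀ hx₀).mp hn]

section AdjointPair

variable {𝕜 V W : Type*} [RCLike 𝕜] [NormedAddCommGroup V] [InnerProductSpace 𝕜 V]
  [NormedAddCommGroup W] [InnerProductSpace 𝕜 W] {f g : W →ₗ[𝕜] V} {f' g' : V →ₗ[𝕜] W} {c : ℝ}

theorem norm_apply_eq_sqrt_mul_norm (hadj : ∀ w v, ⟪f w, v⟫_𝕜 = ⟪w, f' v⟫_𝕜)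
    (hff : ∀ w, f' (f w) = (c : 𝕜) • w) (w : W) : ‖f w‖ = √c * ‖w‖ := by
  have hsq : ‖f w‖ ^ 2 = c * ‖w‖ ^ 2 := by
    rw [← inner_self_eq_norm_sq (𝕜 := 𝕜), hadj, hff, inner_smul_right, RCLike.re_ofReal_mul,
      inner_self_eq_norm_sq]
  rw [← Real.sqrt_sq (norm_nonneg (f w)), hsq, Real.sqrt_mul' c (sq_nonneg _),
    Real.sqrt_sq (norm_nonneg w)]

theorem norm_adjoint_apply_le (hadj : ∀ w v, ⟪f w, v⟫_𝕜 = ⟪w, f' v⟫_𝕜)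
    (hff : ∀ w, f' (f w) = (c : 𝕜) • w) (v : V) : ‖f' v‖ ≤ √c * ‖v‖ := by
  rcases (norm_nonneg (f' v)).eq_or_lt with h | h
  · rw [← h]; positivity
  refine le_of_mul_le_mul_left ?_ h
  calc ‖f' v‖ * ‖f' v‖ = RCLike.re ⟪f (f' v), v⟫_𝕜 := by
        rw [hadj, ← sq, inner_self_eq_norm_sq]
    _ ≤ ‖f (f' v)‖ * ‖v‖ := re_inner_le_norm _ _
    _ = ‖f' v‖ * (√c * ‖v‖) := by rw [norm_apply_eq_sqrt_mul_norm hadj hff]; ring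

variable (hadjf : ∀ w v, ⟪f w, v⟫_𝕜 = ⟪w, f' v⟫_𝕜) (hadjg : ∀ w v, ⟪g w, v⟫_𝕜 = ⟪w, g' v⟫_𝕜)
include hadjf hadjg

theorem apply_eq_of_adjoint_apply_sub_eq_zero {μ : W} (hf : f' (f μ - g μ) = 0)
    (hg : g' (f μ - g μ) = 0) : f μ = g μ := by
  rw [← sub_eq_zero, ← inner_self_eq_zero (𝕜 := 𝕜), inner_sub_left, hadjf, hadjg, hf, hg,
    sub_self]

variable (hff : ∀ w, f' (f w) = (c : 𝕜) • w) (hgg : ∀ w, g' (g w) = (c : 𝕜) • w)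
include hff hgg

theorem inner_apply_sub_apply_eq_zero_of_apply_eq {ν : W} (hν : f ν = g ν) (μ : W) :
    ⟪f ν, f μ - g μ⟫_𝕜 = 0 := by
  rw [inner_sub_right, hadjf, hff, hν, hadjg, hgg, sub_self]

theorem adjoint_apply_eq_zero_of_apply_eq {a : 𝕜} (ha : a ≠ 0) {μ : W} {σ : V}
    (hσ : f μ - g μ = a • σ) (h : f (f' σ) = g (f' σ)) : f' σ = 0 := by
  have hzero : a * ⟪f' σ, f' σ⟫_𝕜 = 0 := by
    rw [← inner_smul_right, ← map_smul, ← hσ, ← hadjf]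
    exact inner_apply_sub_apply_eq_zero_of_apply_eq hadjf hadjg hff hgg h μ
  simpa [ha] using hzero

theorem exists_adjoint_apply_ne_and_norm_le (hc : 0 ≤ c) {a : 𝕜} (ha : a ≠ 0) {μ : W} {σ : V}
    (hσ : f μ - g μ = a • σ) (hne : f μ ≠ g μ) :
    ∃ ν, (ν = f' σ ∨ ν = g' σ) ∧ f ν ≠ g ν ∧ ‖a‖ * ‖ν‖ ≤ 2 * c * ‖μ‖ := by
  have hσ_le : ‖a‖ * ‖σ‖ ≤ 2 * √c * ‖μ‖ :=
    calc ‖a‖ * ‖σ‖ = ‖f μ - g μ‖ := by rw [hσ, norm_smul]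
      _ ≤ ‖f μ‖ + ‖g μ‖ := norm_sub_le _ _
      _ = 2 * √c * ‖μ‖ := by
        rw [norm_apply_eq_sqrt_mul_norm hadjf hff, norm_apply_eq_sqrt_mul_norm hadjg hgg]; ring
  have hbound : ∀ ν : W, ‖ν‖ ≤ √c * ‖σ‖ → ‖a‖ * ‖ν‖ ≤ 2 * c * ‖μ‖ := fun ν hν =>
    calc ‖a‖ * ‖ν‖ ≤ √c * (‖a‖ * ‖σ‖) := by nlinarith [norm_nonneg a]
      _ ≤ √c * (2 * √c * ‖μ‖) := by gcongr
      _ = 2 * c * ‖μ‖ := by linear_combination 2 * ‖μ‖ * Real.mul_self_sqrt hc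
  by_cases hf : f' σ = 0
  · have hg : g' σ ≠ 0 := fun hg => hne <| apply_eq_of_adjoint_apply_sub_eq_zero hadjf hadjg
      (by rw [hσ, map_smul, hf, smul_zero]) (by rw [hσ, map_smul, hg, smul_zero])
    have hσ' : g μ - f μ = (-a) • σ := by rw [neg_smul, ← hσ, neg_sub]
    refine ⟨g' σ, Or.inr rfl, fun h => hg ?_, hbound _ (norm_adjoint_apply_le hadjg hgg σ)⟩
    exact adjoint_apply_eq_zero_of_apply_eq hadjg hadjf hgg hff (neg_ne_zero.mpr ha) hσ' h.symm
  · exact ⟨f' σ, Or.inl rfl, fun h => hf (adjoint_apply_eq_zero_of_apply_eq hadjf hadjg hff hgg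
      ha hσ h), hbound _ (norm_adjoint_apply_le hadjf hff σ)⟩

end AdjointPair

theorem torsion_lemma_general {V W : Type*} [NormedAddCommGroup V] [InnerProductSpace ℂ V]
    [NormedAddCommGroup W] [InnerProductSpace ℂ W]
    (LV : Submodule ℤ V) (LW : Submodule ℤ W)
    [DiscreteTopology LW]
    (hLW : Submodule.span ℂ (LW : Set W) = ⊤)
    (f g : W →ₗ[ℂ] V) (f' g' : V →ₗ[ℂ] W)
    (hf' : ∀ y ∈ LV, f' y ∈ LW) (hg' : ∀ y ∈ LV, g' y ∈ LW)
    (hadjf : ∀ (w : W) (v : V), ⟪f w, v⟫_ℂ = ⟪w, f' v⟫_ℂ)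
    (hadjg : ∀ (w : W) (v : V), ⟪g w, v⟫_ℂ = ⟪w, g' v⟫_ℂ)
    (r : ℤ) (hr : 1 ≤ r)
    (hff : ∀ w : W, f' (f w) = (r : ℂ) • w)
    (hgg : ∀ w : W, g' (g w) = (r : ℂ) • w)
    (d : ℤ) (hd : 2 * r < d)
    (hcong : ∀ x ∈ LW, ∃ y ∈ LV, f x - g x = (d : ℂ) • y) :
    f = g := by
  have hr₀ : (0 : ℝ) ≤ r := by exact_mod_cast (zero_le_one.trans hr)
  have hd₀ : (0 : ℝ) < d := by exact_mod_cast (by linarith : (0 : ℤ) < d)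
  have hd_norm : ‖(d : ℂ)‖ = d := by rw [Complex.norm_intCast, abs_of_pos hd₀]
  have hff' : ∀ w, f' (f w) = ((r : ℝ) : ℂ) • w := by simpa using hff
  have hgg' : ∀ w, g' (g w) = ((r : ℝ) : ℂ) • w := by simpa using hgg
  have hdesc : ∀ μ ∈ {x : LW | f x ≠ g x}, ∃ ν ∈ {x : LW | f x ≠ g x},
      ‖ν‖ ≤ 2 * r / d * ‖μ‖ := by
    intro μ hμ
    obtain ⟨σ, hσL, hσ⟩ := hcong μ μ.2
    obtain ⟨ν, hνσ, hν, hνμ⟩ := exists_adjoint_apply_ne_and_norm_le (c := r) hadjf hadjg hff' hgg' hr₀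
      (by exact_mod_cast hd₀.ne') hσ hμ
    refine ⟨⟨ν, by rcases hνσ with rfl | rfl; exacts [hf' σ hσL, hg' σ hσL]⟩, hν, ?_⟩
    show ‖ν‖ ≤ 2 * r / d * ‖(μ : W)‖
    rw [div_mul_eq_mul_div, le_div_iff₀ hd₀, ← hd_norm]
    linarith
  have hempty := Set.eq_empty_of_forall_exists_norm_le_mul (by simp) (by positivity)
    ((div_lt_one hd₀).mpr (by exact_mod_cast hd)) hdesc
  refine LinearMap.ext_on hLW fun x hx => ?_
  by_contra hne
  exact hempty.subset (show (⟨x, hx⟩ : LW) ∈ {x : LW | f x ≠ g x} from hne)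

/-- Torsion lemma (Lemma 6.1, abstract form): let `L_V ⊂ V`, `L_W ⊂ W` be full-rank
lattices in finite-dimensional complex inner product spaces, and `f, g : W → V`
lattice-preserving maps with lattice-preserving adjoints `f', g'` satisfying
`f' ∘ f = r·id_W = g' ∘ g` for an integer `r ≥ 1`. If `d > 2r` is an integer and
`f(λ) - g(λ) ∈ d·L_V` for all `λ ∈ L_W`, then `f = g`. -/
theorem torsion_lemma {V W : Type*} [NormedAddCommGroup V] [InnerProductSpace ℂ V]
    [NormedAddCommGroup W] [InnerProductSpace ℂ W]
    [FiniteDimensional ℂ V] [FiniteDimensional ℂ W]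
    (LV : Submodule ℤ V) (LW : Submodule ℤ W)
    [DiscreteTopology LV] [DiscreteTopology LW]
    (hLV : Submodule.span ℂ (LV : Set V) = ⊤)
    (hLW : Submodule.span ℂ (LW : Set W) = ⊤)
    (f g : W →ₗ[ℂ] V) (f' g' : V →ₗ[ℂ] W)
    (hf : ∀ x ∈ LW, f x ∈ LV) (hg : ∀ x ∈ LW, g x ∈ LV)
    (hf' : ∀ y ∈ LV, f' y ∈ LW) (hg' : ∀ y ∈ LV, g' y ∈ LW)
    (hadjf : ∀ (w : W) (v : V), ⟪f w, v⟫_ℂ = ⟪w, f' v⟫_ℂ)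
    (hadjg : ∀ (w : W) (v : V), ⟪g w, v⟫_ℂ = ⟪w, g' v⟫_ℂ)
    (r : ℤ) (hr : 1 ≤ r)
    (hff : ∀ w : W, f' (f w) = (r : ℂ) • w)
    (hgg : ∀ w : W, g' (g w) = (r : ℂ) • w)
    (d : ℤ) (hd : 2 * r < d)
    (hcong : ∀ x ∈ LW, ∃ y ∈ LV, f x - g x = (d : ℂ) • y) :
    f = g :=
  torsion_lemma_general LV LW hLW f g f' g' hf' hg' hadjf hadjg r hr hff hgg d hd hcong
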